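/- arXiv:1210.6298 — 2 statements merged into one kernel-verified Lean document; each statement's English description precedes it below -/
import Mathlib

section
/- Let O be an appropriate class of operators. Suppose there exists an O-representable function C : ℕ² → ℕ with C(u,v) = 0 iff (u,v) = (0,0), and O-representable unary functions L, R such that the map s ↦ (L(s), R(s)) is surjective onto ℕ². If θ_0 and θ_1 are conditionally O-computable unary real functions, then the composition ξ ↦ θ_0(θ_1(ξ)) (with domain {ξ ∈ dom θ_1 : θ_1(ξ) ∈ dom θ_0}) is conditionally O-computable. -/
/-- A `k`-ary operator: a map from `k`-tuples of unary total functions on ℕ to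
unary total functions on ℕ. -/
def Op (k : ℕ) := (Fin k → ℕ → ℕ) → ℕ → ℕ

/-- A class of operators, one set for each arity. -/
def OpClass := ∀ k : ℕ, Set (Op k)

/-- A class of operators is appropriate if it contains all projection operators,
contains the composition operator, is closed under composition of operators,
and is closed under diagonalization. -/
structure Appropriate (O : OpClass) : Prop where
  proj : ∀ (k : ℕ) (i : Fin k), (fun fs => fs i) ∈ O k
  comp : (fun (fs : Fin 2 → ℕ → ℕ) n => fs 0 (fs 1 n)) ∈ O 2
  subst : ∀ (k l : ℕ) (F : Op k) (G : Fin k → Op l),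
      F ∈ O k → (∀ i, G i ∈ O l) →
      (fun gs => F (fun i => G i gs)) ∈ O l
  diag : ∀ (k : ℕ) (F : Op (k + 1)), F ∈ O (k + 1) →
      (fun fs n => F (Fin.snoc fs (fun _ => n)) n) ∈ O k

/-- A function `f : ℕ^k → ℕ` is `O`-representable if the pointwise-lifted
operator `f̊` belongs to `O`. -/
def Representable (O : OpClass) (k : ℕ) (f : (Fin k → ℕ) → ℕ) : Prop :=
  (fun fs n => f (fun i => fs i n)) ∈ O k

/-- A triple `(f,g,h)` of total unary functions on ℕ names the real number `ξ`. -/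
def Names (f g h : ℕ → ℕ) (ξ : ℝ) : Prop :=
  ∀ t : ℕ, |((f t : ℝ) - (g t : ℝ)) / ((h t : ℝ) + 1) - ξ| < 1 / ((t : ℝ) + 1)

/-- A `3N`-tuple of functions names the `N`-tuple of reals `ξ` componentwise. -/
def NamesTuple (N : ℕ) (fs : Fin (3 * N) → ℕ → ℕ) (ξ : Fin N → ℝ) : Prop :=
  ∀ i : Fin N,
    Names (fs ⟨3 * i.val, by have := i.isLt; omega⟩)
      (fs ⟨3 * i.val + 1, by have := i.isLt; omega⟩)
      (fs ⟨3 * i.val + 2, by have := i.isLt; omega⟩) (ξ i)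

/-- Uniform `O`-computability of an `N`-argument real function with domain `D`. -/
def UnifComp (O : OpClass) (N : ℕ) (D : Set (Fin N → ℝ))
    (θ : (Fin N → ℝ) → ℝ) : Prop :=
  ∃ F G H : Op (3 * N), F ∈ O (3 * N) ∧ G ∈ O (3 * N) ∧ H ∈ O (3 * N) ∧
    ∀ ξ ∈ D, ∀ fs, NamesTuple N fs ξ → Names (F fs) (G fs) (H fs) (θ ξ)

/-- Conditional `O`-computability of an `N`-argument real function with domain `D`. -/
def CondComp (O : OpClass) (N : ℕ) (D : Set (Fin N → ℝ))
    (θ : (Fin N → ℝ) → ℝ) : Prop :=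
  ∃ E : Op (3 * N), ∃ F G H : Op (3 * N + 1),
    E ∈ O (3 * N) ∧ F ∈ O (3 * N + 1) ∧ G ∈ O (3 * N + 1) ∧ H ∈ O (3 * N + 1) ∧
    ∀ ξ ∈ D, ∀ fs, NamesTuple N fs ξ →
      (∃ s : ℕ, E fs s = 0) ∧
      ∀ s : ℕ, E fs s = 0 →
        Names (F (Fin.snoc fs (fun _ => s))) (G (Fin.snoc fs (fun _ => s)))
          (H (Fin.snoc fs (fun _ => s))) (θ ξ)

/-!
Run the two conditional computations in sequence and let one number `s` carry both witnesses:
`L s` is handed to the inner computation, whose output names `θ1 ξ`, and `R s` to the outer one,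
run on that output. The test for `s` is `C(E1(L s), E0(R s))`, which vanishes exactly when both
witnesses are accepted; since `s ↦ (L s, R s)` is onto, an accepted `s` exists. As a function of
`s` this test is an operator on the name together with `const s`, so diagonalization puts it in `O`.
-/

namespace OpClass

def TupleMem (O : OpClass) {l k : ℕ} (Φ : (Fin l → ℕ → ℕ) → Fin k → ℕ → ℕ) : Prop :=
  ∀ i, (fun gs => Φ gs i) ∈ O l

variable {O : OpClass}

theorem tupleMem_snoc {k l : ℕ} {Φ : (Fin l → ℕ → ℕ) → Fin k → ℕ → ℕ} {A : Op l}
    (hΦ : TupleMem O Φ) (hA : A ∈ O l) :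
    TupleMem O (fun gs => (Fin.snoc (Φ gs) (A gs) : Fin (k + 1) → ℕ → ℕ)) := by
  intro i
  induction i using Fin.lastCases with
  | last => simp only [Fin.snoc_last]; exact hA
  | cast j => simpa only [Fin.snoc_castSucc] using hΦ j

theorem tupleMem_vecCons {k l : ℕ} {A : Op l} {Φ : (Fin l → ℕ → ℕ) → Fin k → ℕ → ℕ}
    (hA : A ∈ O l) (hΦ : TupleMem O Φ) : TupleMem O (fun gs => Matrix.vecCons (A gs) (Φ gs)) := by
  intro i
  induction i using Fin.cases with
  | zero => simp only [Matrix.cons_val_zero]; exact hA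
  | succ j => simpa only [Matrix.cons_val_succ] using hΦ j

theorem tupleMem_vecEmpty {l : ℕ} : TupleMem O (fun _ : Fin l → ℕ → ℕ => ![]) :=
  fun i => i.elim0

end OpClass

open OpClass

def mapLast {k : ℕ} (u : ℕ → ℕ) (gs : Fin (k + 1) → ℕ → ℕ) : Fin (k + 1) → ℕ → ℕ :=
  Fin.snoc (Fin.init gs) fun n => u (gs (Fin.last k) n)

theorem mapLast_snoc_const {k : ℕ} (u : ℕ → ℕ) (fs : Fin k → ℕ → ℕ) (s : ℕ) :
    mapLast u (Fin.snoc fs fun _ => s) = Fin.snoc fs fun _ => u s := by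
  simp [mapLast]

def opTriple {l : ℕ} (F G H : Op l) (gs : Fin l → ℕ → ℕ) : Fin 3 → ℕ → ℕ :=
  ![F gs, G gs, H gs]

theorem namesTuple_opTriple_iff {l : ℕ} (F G H : Op l) (gs : Fin l → ℕ → ℕ) (x : ℝ) :
    NamesTuple 1 (opTriple F G H gs) ![x] ↔ Names (F gs) (G gs) (H gs) x :=
  ⟨fun h => h 0, fun h i => by fin_cases i; exact h⟩

namespace Appropriate

variable {O : OpClass}

theorem comp_mem (hO : Appropriate O) {k l : ℕ} {F : Op k} (hF : F ∈ O k)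
    {Φ : (Fin l → ℕ → ℕ) → Fin k → ℕ → ℕ} (hΦ : TupleMem O Φ) : (fun gs => F (Φ gs)) ∈ O l :=
  hO.subst k l F (fun i gs => Φ gs i) hF hΦ

theorem tupleMem_init (hO : Appropriate O) {k : ℕ} :
    TupleMem O (Fin.init : (Fin (k + 1) → ℕ → ℕ) → _) :=
  fun i => hO.proj (k + 1) i.castSucc

theorem comp_apply_mem (hO : Appropriate O) {k : ℕ} {A B : Op k} (hA : A ∈ O k)
    (hB : B ∈ O k) : (fun fs n => A fs (B fs n)) ∈ O k :=
  hO.comp_mem hO.comp (tupleMem_vecCons hA (tupleMem_vecCons hB tupleMem_vecEmpty))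

theorem representable_comp_mem₁ (hO : Appropriate O) {l : ℕ} {u : ℕ → ℕ}
    (hu : Representable O 1 fun v => u (v 0)) {A : Op l} (hA : A ∈ O l) :
    (fun gs n => u (A gs n)) ∈ O l :=
  hO.comp_mem hu (Φ := fun gs _ => A gs) fun _ => hA

theorem representable_comp_mem₂ (hO : Appropriate O) {l : ℕ} {f : (Fin 2 → ℕ) → ℕ}
    (hf : Representable O 2 f) {A B : Op l} (hA : A ∈ O l) (hB : B ∈ O l) :
    (fun gs n => f ![A gs n, B gs n]) ∈ O l := by
  simpa only [Matrix.cons_val', Matrix.empty_val'] using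
    hO.comp_mem hf (tupleMem_vecCons hA (tupleMem_vecCons hB tupleMem_vecEmpty))

theorem tupleMem_mapLast (hO : Appropriate O) {k : ℕ} {u : ℕ → ℕ}
    (hu : Representable O 1 fun v => u (v 0)) :
    TupleMem O (mapLast u : (Fin (k + 1) → ℕ → ℕ) → _) :=
  tupleMem_snoc hO.tupleMem_init (hO.representable_comp_mem₁ hu (hO.proj _ (Fin.last k)))

theorem tupleMem_opTriple (hO : Appropriate O) {k l : ℕ} {F G H : Op k} (hF : F ∈ O k)
    (hG : G ∈ O k) (hH : H ∈ O k) {Φ : (Fin l → ℕ → ℕ) → Fin k → ℕ → ℕ} (hΦ : TupleMem O Φ) :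
    TupleMem O fun gs => opTriple F G H (Φ gs) :=
  tupleMem_vecCons (hO.comp_mem hF hΦ) <| tupleMem_vecCons (hO.comp_mem hG hΦ) <|
    tupleMem_vecCons (hO.comp_mem hH hΦ) tupleMem_vecEmpty

end Appropriate

section Composition

variable {k : ℕ} (C : (Fin 2 → ℕ) → ℕ) (L R : ℕ → ℕ) (E1 : Op k) (F1 G1 H1 : Op (k + 1))
  (E0 : Op 3)

def compInput (gs : Fin (k + 1) → ℕ → ℕ) : Fin 4 → ℕ → ℕ :=
  Fin.snoc (opTriple F1 G1 H1 (mapLast L gs)) fun n => R (gs (Fin.last k) n)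

-- Its diagonal `fs n ↦ compTest (Fin.snoc fs (const n)) n` tests a witness `n` of the composite.
def compTest : Op (k + 1) := fun gs n =>
  C ![E1 (Fin.init gs) (L (gs (Fin.last k) n)),
    E0 (opTriple F1 G1 H1 (mapLast L gs)) (R (gs (Fin.last k) n))]

theorem compInput_snoc_const (fs : Fin k → ℕ → ℕ) (s : ℕ) :
    compInput L R F1 G1 H1 (Fin.snoc fs fun _ => s) =
      Fin.snoc (opTriple F1 G1 H1 (Fin.snoc fs fun _ => L s)) fun _ => R s := by
  simp only [compInput, mapLast_snoc_const, Fin.snoc_last]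

theorem compTest_snoc_const (fs : Fin k → ℕ → ℕ) (s : ℕ) :
    compTest C L R E1 F1 G1 H1 E0 (Fin.snoc fs fun _ => s) s =
      C ![E1 fs (L s), E0 (opTriple F1 G1 H1 (Fin.snoc fs fun _ => L s)) (R s)] := by
  simp only [compTest, mapLast_snoc_const, Fin.init_snoc, Fin.snoc_last]

variable {O : OpClass} {C L R E1 F1 G1 H1 E0}

theorem Appropriate.tupleMem_compInput (hO : Appropriate O)
    (hL : Representable O 1 fun v => L (v 0)) (hR : Representable O 1 fun v => R (v 0))
    (hF1 : F1 ∈ O (k + 1)) (hG1 : G1 ∈ O (k + 1)) (hH1 : H1 ∈ O (k + 1)) :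
    TupleMem O (compInput L R F1 G1 H1) :=
  tupleMem_snoc (hO.tupleMem_opTriple hF1 hG1 hH1 (hO.tupleMem_mapLast hL))
    (hO.representable_comp_mem₁ hR (hO.proj _ (Fin.last k)))

theorem Appropriate.compTest_mem (hO : Appropriate O) (hC : Representable O 2 C)
    (hL : Representable O 1 fun v => L (v 0)) (hR : Representable O 1 fun v => R (v 0))
    (hE1 : E1 ∈ O k) (hF1 : F1 ∈ O (k + 1)) (hG1 : G1 ∈ O (k + 1)) (hH1 : H1 ∈ O (k + 1))
    (hE0 : E0 ∈ O 3) : compTest C L R E1 F1 G1 H1 E0 ∈ O (k + 1) := by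
  have hLast := hO.proj (k + 1) (Fin.last k)
  exact hO.representable_comp_mem₂ hC
    (hO.comp_apply_mem (hO.comp_mem hE1 hO.tupleMem_init) (hO.representable_comp_mem₁ hL hLast))
    (hO.comp_apply_mem (hO.comp_mem hE0 (hO.tupleMem_opTriple hF1 hG1 hH1
      (hO.tupleMem_mapLast hL))) (hO.representable_comp_mem₁ hR hLast))

end Composition

theorem CondComp.comp {O : OpClass} (hO : Appropriate O) {C : (Fin 2 → ℕ) → ℕ}
    (hCrep : Representable O 2 C) (hC : ∀ u v : ℕ, C ![u, v] = 0 ↔ u = 0 ∧ v = 0) {L R : ℕ → ℕ}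
    (hL : Representable O 1 fun v => L (v 0)) (hR : Representable O 1 fun v => R (v 0))
    (hLR : ∀ u v : ℕ, ∃ s : ℕ, L s = u ∧ R s = v) {N : ℕ} {D0 : Set (Fin 1 → ℝ)}
    {D1 : Set (Fin N → ℝ)} {θ0 : (Fin 1 → ℝ) → ℝ} {θ1 : (Fin N → ℝ) → ℝ}
    (h0 : CondComp O 1 D0 θ0) (h1 : CondComp O N D1 θ1) :
    CondComp O N {ξ | ξ ∈ D1 ∧ ![θ1 ξ] ∈ D0} (fun ξ => θ0 ![θ1 ξ]) := by
  obtain ⟨E1, F1, G1, H1, hE1, hF1, hG1, hH1, hθ1⟩ := h1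
  obtain ⟨E0, F0, G0, H0, hE0, hF0, hG0, hH0, hθ0⟩ := h0
  have hInput := hO.tupleMem_compInput hL hR hF1 hG1 hH1
  refine ⟨fun fs n => compTest C L R E1 F1 G1 H1 E0 (Fin.snoc fs fun _ => n) n,
    fun gs => F0 (compInput L R F1 G1 H1 gs), fun gs => G0 (compInput L R F1 G1 H1 gs),
    fun gs => H0 (compInput L R F1 G1 H1 gs),
    hO.diag _ _ (hO.compTest_mem hCrep hL hR hE1 hF1 hG1 hH1 hE0),
    hO.comp_mem hF0 hInput, hO.comp_mem hG0 hInput, hO.comp_mem hH0 hInput, ?_⟩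
  rintro ξ ⟨hξ1, hξ0⟩ fs hfs
  obtain ⟨⟨s1, hs1⟩, hnames1⟩ := hθ1 ξ hξ1 fs hfs
  have hinner (m : ℕ) (hm : E1 fs m = 0) :
      NamesTuple 1 (opTriple F1 G1 H1 (Fin.snoc fs fun _ => m)) ![θ1 ξ] :=
    (namesTuple_opTriple_iff _ _ _ _ _).2 (hnames1 m hm)
  refine ⟨?_, fun s hs => ?_⟩
  · obtain ⟨⟨s0, hs0⟩, -⟩ := hθ0 _ hξ0 _ (hinner s1 hs1)
    obtain ⟨s, rfl, rfl⟩ := hLR s1 s0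
    exact ⟨s, by simp only [compTest_snoc_const, hs1, hs0, hC, and_self]⟩
  · obtain ⟨hs1, hs0⟩ := (hC _ _).1 ((compTest_snoc_const ..).symm.trans hs)
    simpa only [compInput_snoc_const] using (hθ0 _ hξ0 _ (hinner _ hs1)).2 _ hs0

/-- Substitution preserves conditional `O`-computability of unary real
functions, under the assumptions on `C`, `L`, `R`. -/
theorem condComp_comp (O : OpClass) (hO : Appropriate O)
    (C : (Fin 2 → ℕ) → ℕ) (hCrep : Representable O 2 C)
    (hC : ∀ u v : ℕ, C ![u, v] = 0 ↔ u = 0 ∧ v = 0)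
    (L R : ℕ → ℕ)
    (hL : Representable O 1 (fun v => L (v 0)))
    (hR : Representable O 1 (fun v => R (v 0)))
    (hLR : ∀ u v : ℕ, ∃ s : ℕ, L s = u ∧ R s = v)
    (D0 D1 : Set (Fin 1 → ℝ)) (θ0 θ1 : (Fin 1 → ℝ) → ℝ)
    (h0 : CondComp O 1 D0 θ0) (h1 : CondComp O 1 D1 θ1) :
    CondComp O 1 {ξ | ξ ∈ D1 ∧ ![θ1 ξ] ∈ D0} (fun ξ => θ0 ![θ1 ξ]) :=
  CondComp.comp hO hCrep hC hL hR hLR h0 h1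
end

section
/- Let O be an appropriate class of continuous operators such that all constant unary functions and all functions μ_{k,c} (where μ_{k,c}(x,y) = c if x = k and y otherwise) are O-representable. Then every conditionally O-computable real function θ : D → ℝ, D ⊆ ℝ, is locally uniformly O-computable: every point of D has a neighbourhood U such that the restriction of θ to D ∩ U is uniformly O-computable. -/
/-- Continuity of a `k`-ary operator. -/
def OpContinuous {k : ℕ} (G : Op k) : Prop :=
  ∀ (fs : Fin k → ℕ → ℕ) (n : ℕ), ∃ u : ℕ, ∀ gs : Fin k → ℕ → ℕ,
    (∀ i, ∀ t ≤ u, gs i t = fs i t) → G gs n = G fs n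

/-!
Fix `ξ ∈ D`, a name `c` of `ξ` and a witness `s` with `E c s = 0`. By continuity of `E`, the
value `E · s` only depends on the first `u + 1` values of its arguments for some `u`. The naming
inequalities are strict, so the finitely many of them with `t ≤ u` that `c` satisfies at `ξ`
still hold at every `η` near `ξ`. For such `η`, overwriting the first `u + 1` values of any name
of `η` by those of `c` gives another name of `η`, now with `E · s = 0`, so `F`, `G`, `H` applied
to it together with the constant `s` name `θ η`. The overwriting is an iterate of the operators
`μ_{k,c}`, so the resulting uniform operators stay in `O`.
-/

open Topology

def patch (c : ℕ → ℕ) (u : ℕ) (f : ℕ → ℕ) (n : ℕ) : ℕ := if n < u then c n else f n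

theorem patch_zero (c f : ℕ → ℕ) : patch c 0 f = f := by
  funext n; simp [patch]

theorem patch_succ (c f : ℕ → ℕ) (u n : ℕ) :
    patch c (u + 1) f n = if n = u then c u else patch c u f n := by
  by_cases h : n = u
  · simp [patch, h]
  · simp [patch, h, Nat.le_iff_lt_or_eq]

namespace Appropriate

variable {O : OpClass} {k : ℕ}

theorem id_mem (hO : Appropriate O) : (fun _ n => n : Op k) ∈ O k := by
  simpa using hO.diag k _ (hO.proj (k + 1) (Fin.last k))

theorem const_mem (hO : Appropriate O) (hconst : ∀ c : ℕ, Representable O 1 (fun _ => c))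
    (s : ℕ) : (fun _ _ => s : Op k) ∈ O k :=
  hO.subst 1 k _ (fun _ => fun _ n => n) (hconst s) fun _ => hO.id_mem

theorem snoc_const_mem (hO : Appropriate O) (hconst : ∀ c : ℕ, Representable O 1 (fun _ => c))
    {F : Op (k + 1)} (hF : F ∈ O (k + 1)) (s : ℕ) :
    (fun fs => F (Fin.snoc fs fun _ => s)) ∈ O k := by
  have hG : ∀ i, Fin.snoc (α := fun _ => Op k) (fun i fs => fs i) (fun _ _ => s) i ∈ O k :=
    Fin.lastCases
      ((Fin.snoc_last (α := fun _ => Op k) _ _).symm ▸ hO.const_mem hconst s)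
      fun j => (Fin.snoc_castSucc (α := fun _ => Op k) _ _ _).symm ▸ hO.proj k j
  convert hO.subst (k + 1) k F _ hF hG using 3 with fs
  exact (Fin.comp_snoc (fun G : Op k => G fs) (fun i fs => fs i) fun _ _ => s).symm

theorem update_mem (hO : Appropriate O)
    (hmu : ∀ m c : ℕ, Representable O 2 (fun v => if v 0 = m then c else v 1))
    {F : Op k} (hF : F ∈ O k) (m c : ℕ) :
    (fun fs n => if n = m then c else F fs n) ∈ O k :=
  hO.subst 2 k _ ![fun _ n => n, F] (hmu m c) fun i => by
    fin_cases i
    exacts [hO.id_mem, hF]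

theorem patch_mem (hO : Appropriate O)
    (hmu : ∀ m c : ℕ, Representable O 2 (fun v => if v 0 = m then c else v 1))
    {F : Op k} (hF : F ∈ O k) (c : ℕ → ℕ) (u : ℕ) :
    (fun fs => patch c u (F fs)) ∈ O k := by
  induction u with
  | zero => simp only [patch_zero]; exact hF
  | succ u ih =>
    convert hO.update_mem hmu ih u (c u) using 1
    exact funext fun fs => funext (patch_succ c (F fs) u)

end Appropriate

theorem namesTuple_one_iff {fs : Fin 3 → ℕ → ℕ} {ξ : Fin 1 → ℝ} :
    NamesTuple 1 fs ξ ↔ Names (fs 0) (fs 1) (fs 2) (ξ 0) :=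
  ⟨fun h => h 0, fun h i => Subsingleton.elim 0 i ▸ h⟩

theorem exists_names (x : ℝ) : ∃ f g h : ℕ → ℕ, Names f g h x := by
  refine ⟨fun t => (round (x * (t + 1))).toNat, fun t => (-round (x * (t + 1))).toNat,
    fun t => t, fun t => ?_⟩
  have ht : (0 : ℝ) < t + 1 := by positivity
  have hdiff : (((round (x * (t + 1))).toNat : ℕ) : ℝ) - ((-round (x * (t + 1))).toNat : ℕ)
      = round (x * (t + 1)) := by
    exact_mod_cast Int.toNat_sub_toNat_neg _
  calc _ = |((round (x * (t + 1)) : ℝ) - x * (t + 1)) / (t + 1)| := by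
        rw [hdiff]; congr 1; field_simp
    _ = |(round (x * (t + 1)) : ℝ) - x * (t + 1)| / (t + 1) := by
        rw [abs_div, abs_of_pos ht]
    _ ≤ 1 / 2 / (t + 1) := by
        gcongr
        rw [abs_sub_comm]
        exact abs_sub_round _
    _ < 1 / (t + 1) := by gcongr; norm_num

def NamesBelow (u : ℕ) (f g h : ℕ → ℕ) (y : ℝ) : Prop :=
  ∀ t < u, |((f t : ℝ) - g t) / (h t + 1) - y| < 1 / (t + 1)

theorem Names.eventually_namesBelow {f g h : ℕ → ℕ} {x : ℝ} (hx : Names f g h x) (u : ℕ) :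
    ∀ᶠ y in 𝓝 x, NamesBelow u f g h y :=
  (Set.finite_lt_nat u).eventually_all.2 fun t _ =>
    (continuousAt_const.sub continuousAt_id).abs.eventually_lt continuousAt_const (hx t)

theorem Names.patch {f g h f' g' h' : ℕ → ℕ} {y : ℝ} {u : ℕ} (hy : Names f' g' h' y)
    (hu : NamesBelow u f g h y) : Names (patch f u f') (patch g u g') (patch h u h') y := by
  intro t
  by_cases ht : t < u
  · simp only [_root_.patch, if_pos ht]
    exact hu t ht
  · simp only [_root_.patch, if_neg ht]
    exact hy t

/-- For an appropriate class `O` of continuous operators in which all unary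
constant functions and all functions `μ_{k,c}` are representable, every
conditionally `O`-computable real function is locally uniformly
`O`-computable. -/
theorem condComp_locallyUnifComp (O : OpClass) (hO : Appropriate O)
    (hcont : ∀ (k : ℕ) (F : Op k), F ∈ O k → OpContinuous F)
    (hconst : ∀ c : ℕ, Representable O 1 (fun _ => c))
    (hmu : ∀ k c : ℕ, Representable O 2 (fun v => if v 0 = k then c else v 1))
    (D : Set (Fin 1 → ℝ)) (θ : (Fin 1 → ℝ) → ℝ)
    (h : CondComp O 1 D θ) :
    ∀ ξ ∈ D, ∃ U ∈ nhds ξ, UnifComp O 1 (D ∩ U) θ := by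
  obtain ⟨E, F, G, H, hE, hF, hG, hH, hθ⟩ := h
  intro ξ hξ
  obtain ⟨f, g, h, hname⟩ := exists_names (ξ 0)
  let c : Fin 3 → ℕ → ℕ := ![f, g, h]
  obtain ⟨s, hs⟩ := (hθ ξ hξ c (namesTuple_one_iff.2 hname)).1
  obtain ⟨u, hu⟩ := hcont _ E hE c s
  let P : (Fin 3 → ℕ → ℕ) → Fin 3 → ℕ → ℕ := fun fs j => patch (c j) (u + 1) (fs j)
  have hmem : ∀ K ∈ O 4, (fun fs => K (Fin.snoc (P fs) fun _ => s)) ∈ O 3 := fun K hK =>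
    hO.subst 3 3 _ _ (hO.snoc_const_mem hconst hK s) fun j => hO.patch_mem hmu (hO.proj 3 j) _ _
  refine ⟨(fun η => η 0) ⁻¹' {y | NamesBelow (u + 1) f g h y},
    (continuous_apply 0).continuousAt.preimage_mem_nhds (hname.eventually_namesBelow (u + 1)),
    _, _, _, hmem F hF, hmem G hG, hmem H hH, ?_⟩
  rintro η ⟨hηD, hηU⟩ fs hfs
  have hPfs : NamesTuple 1 (P fs) η := namesTuple_one_iff.2 ((namesTuple_one_iff.1 hfs).patch hηU)
  have hEs : E (P fs) s = 0 := (hu _ fun i t ht => if_pos (Nat.lt_succ_of_le ht)).trans hs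
  exact (hθ η hηD _ hPfs).2 s hEs
end
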